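/- Suppose every d×d Hermitian positive semidefinite matrix ρ with tr(ρ)=1 and tr(ρ²) ≤ 1/(d−1) belongs to a set SEP, and suppose W is a d×d Hermitian matrix with tr(Wρ) ≥ 0 for all ρ ∈ SEP. Then tr(W)² ≥ tr(W²), i.e. the factor α = tr(W)/√(tr(W²)) satisfies α² ≥ 1. -/

import Mathlib

/-!
Write `W = σ + (t / d) • 1` with `t = tr W` and `σ` traceless Hermitian, so that
`tr W² = tr σ² + t² / d`. The matrices `ρₓ = (1 / d) • 1 - x • σ` are Hermitian of unit trace
with `tr ρₓ² = 1 / d + x² tr σ²`, hence lie in the ball whenever `x² tr σ² ≤ 1 / (d (d - 1))`,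
and the witness property gives `t / d - x tr σ² ≥ 0` for all such `x`. At the extreme
`x = (d (d - 1) tr σ²)^(-1/2)` this reads `d tr σ² ≤ (d - 1) t²`, which is `tr W² ≤ t²`.
-/

open Matrix

namespace Matrix

variable {n : Type*} [Fintype n]

lemma IsHermitian.isSelfAdjoint_trace {A : Matrix n n ℂ} (hA : A.IsHermitian) :
    IsSelfAdjoint A.trace := by
  rw [isSelfAdjoint_iff, ← trace_conjTranspose, hA.eq]

variable [DecidableEq n]

noncomputable def tracelessPart (A : Matrix n n ℂ) : Matrix n n ℂ :=
  A - (A.trace / Fintype.card n) • 1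

lemma IsHermitian.tracelessPart {A : Matrix n n ℂ} (hA : A.IsHermitian) :
    A.tracelessPart.IsHermitian :=
  hA.sub (isHermitian_one.smul (hA.isSelfAdjoint_trace.div (.natCast _)))

noncomputable def perturbMaximallyMixed (σ : Matrix n n ℂ) (x : ℝ) : Matrix n n ℂ :=
  (1 / Fintype.card n : ℂ) • 1 - (x : ℂ) • σ

lemma IsHermitian.perturbMaximallyMixed {σ : Matrix n n ℂ} (hσ : σ.IsHermitian) (x : ℝ) :
    (σ.perturbMaximallyMixed x).IsHermitian :=
  (isHermitian_one.smul ((IsSelfAdjoint.one _).div (.natCast _))).sub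
    (hσ.smul (Complex.conj_ofReal x))

lemma trace_mul_perturbMaximallyMixed (A σ : Matrix n n ℂ) (x : ℝ) :
    (A * σ.perturbMaximallyMixed x).trace = A.trace / Fintype.card n - x * (A * σ).trace := by
  simp only [Matrix.perturbMaximallyMixed, mul_sub, Matrix.mul_smul, mul_one, trace_sub,
    trace_smul, smul_eq_mul]
  ring

variable [Nonempty n]

lemma trace_tracelessPart (A : Matrix n n ℂ) : A.tracelessPart.trace = 0 := by
  have : (Fintype.card n : ℂ) ≠ 0 := by simp
  simp only [Matrix.tracelessPart, trace_sub, trace_smul, trace_one, smul_eq_mul]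
  field_simp
  ring

lemma trace_mul_self_eq_trace_tracelessPart_mul_self (A : Matrix n n ℂ) :
    (A * A).trace =
      (A.tracelessPart * A.tracelessPart).trace + A.trace ^ 2 / Fintype.card n := by
  have : (Fintype.card n : ℂ) ≠ 0 := by simp
  simp only [Matrix.tracelessPart, sub_mul, mul_sub, Matrix.smul_mul, Matrix.mul_smul, one_mul,
    mul_one, smul_smul, trace_sub, trace_smul, trace_one, smul_eq_mul]
  field_simp
  ring

lemma trace_mul_tracelessPart (A : Matrix n n ℂ) :
    (A * A.tracelessPart).trace = (A.tracelessPart * A.tracelessPart).trace := by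
  have : (Fintype.card n : ℂ) ≠ 0 := by simp
  simp only [Matrix.tracelessPart, sub_mul, mul_sub, Matrix.smul_mul, Matrix.mul_smul, one_mul,
    mul_one, smul_smul, trace_sub, trace_smul, trace_one, smul_eq_mul]
  field_simp
  ring

variable {σ : Matrix n n ℂ}

lemma trace_perturbMaximallyMixed (hσ : σ.trace = 0) (x : ℝ) :
    (σ.perturbMaximallyMixed x).trace = 1 := by
  have : (Fintype.card n : ℂ) ≠ 0 := by simp
  simp [Matrix.perturbMaximallyMixed, trace_sub, trace_smul, hσ, this]

lemma trace_perturbMaximallyMixed_mul_self (hσ : σ.trace = 0) (x : ℝ) :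
    (σ.perturbMaximallyMixed x * σ.perturbMaximallyMixed x).trace =
      1 / Fintype.card n + x ^ 2 * (σ * σ).trace := by
  have : (Fintype.card n : ℂ) ≠ 0 := by simp
  simp only [Matrix.perturbMaximallyMixed, sub_mul, mul_sub, Matrix.smul_mul, Matrix.mul_smul,
    one_mul, mul_one, smul_smul, trace_sub, trace_smul, trace_one, hσ, smul_eq_mul]
  field_simp
  ring

end Matrix

lemma add_sq_div_le_sq_of_forall {d t c : ℝ} (hd : 1 < d)
    (h : ∀ x : ℝ, 1 / d + x ^ 2 * c ≤ 1 / (d - 1) → 0 ≤ t / d - x * c) :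
    c + t ^ 2 / d ≤ t ^ 2 := by
  by_contra! hlt
  have hd0 : 0 < d := by linarith
  have hd1 : 0 < d - 1 := by linarith
  have hgap : t ^ 2 * (d - 1) < c * d := by
    have := mul_lt_mul_of_pos_right hlt hd0
    rw [add_mul, div_mul_cancel₀ _ hd0.ne'] at this
    linarith
  have hc : 0 < c := by nlinarith [sq_nonneg t]
  set K := Real.sqrt (c * d * (d - 1))
  have hK : 0 < K := Real.sqrt_pos.mpr (by positivity)
  have hK2 : K ^ 2 = c * d * (d - 1) := Real.sq_sqrt (by positivity)
  have hwit := h (1 / K) <| le_of_eq <| by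
    rw [div_pow, hK2]
    field_simp
    ring
  have hcd : c * d ≤ t * K := by
    have := mul_nonneg (mul_pos hd0 hK).le hwit
    have e : d * K * (t / d - 1 / K * c) = t * K - c * d := by field_simp
    linarith
  have hsq : (c * d) ^ 2 ≤ t ^ 2 * (c * d * (d - 1)) := by
    rw [← hK2, ← mul_pow]
    exact pow_le_pow_left₀ (by positivity) hcd 2
  nlinarith [mul_lt_mul_of_pos_right hgap (mul_pos hc hd0)]

theorem stmt_2_general (d : ℕ) (hd : 2 ≤ d)
    (SEP : Set (Matrix (Fin d) (Fin d) ℂ))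
    (hball : ∀ ρ : Matrix (Fin d) (Fin d) ℂ, ρ.IsHermitian → ρ.trace = 1 →
      (ρ * ρ).trace.re ≤ 1 / ((d : ℝ) - 1) → ρ ∈ SEP)
    (W : Matrix (Fin d) (Fin d) ℂ) (hW : W.IsHermitian)
    (hwitness : ∀ ρ ∈ SEP, 0 ≤ (W * ρ).trace.re) :
    (W * W).trace.re ≤ W.trace.re ^ 2 := by
  have : Nonempty (Fin d) := ⟨⟨0, by omega⟩⟩
  have hσ : W.tracelessPart.trace = 0 := trace_tracelessPart W
  have htr : W.trace = W.trace.re :=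
    (Complex.re_eq_ofReal_of_isSelfAdjoint hW.isSelfAdjoint_trace).mp rfl
  have hWW : (W * W).trace.re =
      (W.tracelessPart * W.tracelessPart).trace.re + W.trace.re ^ 2 / d := by
    rw [trace_mul_self_eq_trace_tracelessPart_mul_self, Fintype.card_fin, htr]
    simp [← Complex.ofReal_natCast, ← Complex.ofReal_pow, ← Complex.ofReal_div]
  rw [hWW]
  refine add_sq_div_le_sq_of_forall (by exact_mod_cast hd) fun x hx => ?_
  have hρ : W.tracelessPart.perturbMaximallyMixed x ∈ SEP := by
    refine hball _ (hW.tracelessPart.perturbMaximallyMixed x)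
      (trace_perturbMaximallyMixed hσ x) ?_
    rw [trace_perturbMaximallyMixed_mul_self hσ, Fintype.card_fin]
    simpa [← Complex.ofReal_pow, ← Complex.ofReal_natCast, ← Complex.ofReal_one,
      ← Complex.ofReal_div] using hx
  have hWρ := hwitness _ hρ
  rw [trace_mul_perturbMaximallyMixed, trace_mul_tracelessPart, Fintype.card_fin, htr] at hWρ
  simpa [← Complex.ofReal_natCast, ← Complex.ofReal_div] using hWρ

theorem stmt_2 (d : ℕ) (hd : 2 ≤ d)
    (SEP : Set (Matrix (Fin d) (Fin d) ℂ))
    (hball : ∀ ρ : Matrix (Fin d) (Fin d) ℂ, ρ.IsHermitian → ρ.trace = 1 →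
      (ρ * ρ).trace.re ≤ 1 / ((d : ℝ) - 1) → ρ ∈ SEP)
    (W : Matrix (Fin d) (Fin d) ℂ) (hW : W.IsHermitian)
    (hwitness : ∀ ρ ∈ SEP, 0 ≤ (W * ρ).trace.re)
    (hW2 : 0 < (W * W).trace.re) :
    (W * W).trace.re ≤ W.trace.re ^ 2 :=
  stmt_2_general d hd SEP hball W hW hwitness
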